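/- Let k ≥ 1 and let a_1 < a_2 < … < a_k be positive integers, A = {a_1,…,a_k}. In ℚ[[x,y]], writing Q_i = 1 + x^{2a_i}·y^2 (invertible, constant term 1), one has ∑_{n≥0} ∑_{σ∈F_n^A} rises(σ)·x^n·y^{parts(σ)} = [ ( ∑_{i=1}^k x^{3a_i}·y^3·Q_i^{-2} )·( ∑_{i=1}^k x^{2a_i}·y^2·Q_i^{-1} − 1 ) + ( ∑_{i=1}^k x^{a_i}·y·Q_i^{-1} )·( ∑_{i=1}^k x^{2a_i}·y^2·Q_i^{-2} ) ] · ( 1 − ∑_{i=1}^k x^{2a_i}·y^2·Q_i^{-1} )^{-2}. -/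

import Mathlib

open scoped Classical

open MvPowerSeries

/-- Number of rises of a list (adjacent pairs with strict increase). -/
def risesL (l : List ℕ) : ℕ := (l.zip l.tail).countP (fun p => decide (p.1 < p.2))

/-- `∑_{n≥0} ∑_{σ∈F_n^A} rises(σ) x^n y^{parts(σ)}` in `ℚ[[x,y]]`, with
`x = X 0`, `y = X 1`; `F_n^A` is the set of Carlitz palindromic compositions
of `n` with parts in `A = {a 1, …, a k}`. -/
noncomputable def fRises {k : ℕ} (a : Fin k → ℕ) : MvPowerSeries (Fin 2) ℚ :=
  fun m => ((∑ c ∈ Finset.univ.filter (fun c : Composition (m 0) =>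
      (∀ b ∈ c.blocks, ∃ i, a i = b) ∧ c.blocks.Chain' (· ≠ ·) ∧
      c.blocks.reverse = c.blocks ∧ c.length = m 1),
      risesL c.blocks : ℕ) : ℚ)

/-- `Q i = 1 + x^{2a_i} y²`. -/
noncomputable def QQ {k : ℕ} (a : Fin k → ℕ) (i : Fin k) : MvPowerSeries (Fin 2) ℚ :=
  1 + (X 0) ^ (2 * a i) * (X 1) ^ 2

namespace Stmt17

open List

/- ### risesL lemmas -/

lemma risesL_nil : risesL [] = 0 := rfl

lemma risesL_cons_cons (x y : ℕ) (t : List ℕ) :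
    risesL (x :: y :: t) = (if x < y then 1 else 0) + risesL (y :: t) := by
  simp [risesL, List.countP_cons, add_comm]

lemma risesL_cons (x : ℕ) (l : List ℕ) :
    risesL (x :: l) = (if x < l.headI then 1 else 0) + risesL l := by
  cases l with
  | nil => simp [risesL]
  | cons y t => convert risesL_cons_cons x y t using 3; exact Iff.rfl

lemma risesL_append_singleton (l : List ℕ) (y : ℕ) :
    risesL (l ++ [y]) = risesL l + (if l.getLastD y < y then 1 else 0) := by
  induction l with
  | nil => simp [risesL]
  | cons x t ih =>
      cases t with
      | nil => simp [risesL, List.countP_cons]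
      | cons b u =>
          rw [List.cons_append, List.cons_append, risesL_cons_cons, risesL_cons_cons]
          rw [show (b :: (u ++ [y])) = (b :: u) ++ [y] by simp, ih]
          simp [List.getLastD_cons]
          ring

lemma headI_append_of_ne_nil {α : Type*} [Inhabited α] (l l' : List α) (h : l ≠ []) :
    (l ++ l').headI = l.headI := by
  cases l with
  | nil => exact absurd rfl h
  | cons a t => rfl

lemma risesL_palin (u : List ℕ) (x : ℕ) (h : (u ++ [x]).Chain' (· ≠ ·)) :
    risesL (u ++ [x] ++ u.reverse) = u.length := by
  induction u with
  | nil => simp [risesL]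
  | cons b u' ih =>
      have hM : ((b :: u') ++ [x] ++ (b :: u').reverse)
          = b :: ((u' ++ [x] ++ u'.reverse) ++ [b]) := by simp
      set M : List ℕ := u' ++ [x] ++ u'.reverse with hMdef
      have hMne : M ≠ [] := by simp [hMdef]
      have hchain' : (u' ++ [x]).Chain' (· ≠ ·) := by
        rw [List.cons_append, List.Chain', List.isChain_cons] at h
        exact h.2
      have hIH : risesL M = u'.length := ih hchain'
      have hhead : M.headI = (u' ++ [x]).headI := by
        rw [hMdef]
        exact headI_append_of_ne_nil _ _ (by simp)
      have hlast : M.getLastD b = (u' ++ [x]).headI := by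
        cases u' with
        | nil => simp [hMdef]
        | cons d u'' =>
            have : M = ((d :: u'') ++ [x] ++ u''.reverse) ++ [d] := by
              simp [hMdef]
            rw [this, List.getLastD_concat]
            rfl
      have hbne : b ≠ (u' ++ [x]).headI := by
        rw [List.cons_append, List.Chain', List.isChain_cons] at h
        apply h.1
        cases u' <;> rfl
      rw [hM, risesL_cons, risesL_append_singleton,
        headI_append_of_ne_nil _ _ hMne, hIH, hhead, hlast]
      simp only [List.length_cons]
      rcases Nat.lt_or_ge b ((u' ++ [x]).headI) with hlt | hge
      · rw [if_pos hlt, if_neg (Nat.lt_asymm hlt)]; omega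
      · have h1 : ¬ b < (u' ++ [x]).headI := Nat.not_lt.mpr hge
        have h2 : (u' ++ [x]).headI < b := Nat.lt_of_le_of_ne hge (Ne.symm hbne)
        rw [if_neg h1, if_pos h2]; omega


/- ### halfword setup -/

abbrev HW (k : ℕ) := List (Fin k) × Fin k

abbrev R2 := MvPowerSeries (Fin 2) ℚ

variable {k : ℕ} (a : Fin k → ℕ)

noncomputable def dz (i : Fin k) : (Fin 2) →₀ ℕ :=
  Finsupp.single 0 (2 * a i) + Finsupp.single 1 2

noncomputable def dw (i : Fin k) : (Fin 2) →₀ ℕ :=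
  Finsupp.single 0 (a i) + Finsupp.single 1 1

noncomputable def dg (p : HW k) : (Fin 2) →₀ ℕ :=
  Finsupp.single 0 (2 * (p.1.map a).sum + a p.2) + Finsupp.single 1 (2 * p.1.length + 1)

def good (p : HW k) : Prop := (p.1 ++ [p.2]).Chain' (· ≠ ·)

noncomputable def first (p : HW k) : Fin k := p.1.head?.getD p.2

@[simp] lemma dg_apply_zero (p : HW k) : dg a p 0 = 2 * (p.1.map a).sum + a p.2 := by
  simp [dg, Finsupp.single_apply]

@[simp] lemma dg_apply_one (p : HW k) : dg a p 1 = 2 * p.1.length + 1 := by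
  simp [dg, Finsupp.single_apply]

lemma dg_cons (i : Fin k) (l : List (Fin k)) (c : Fin k) :
    dg a (i :: l, c) = dz a i + dg a (l, c) := by
  ext x
  fin_cases x <;> simp [dg, dz, Finsupp.single_apply] <;> ring

lemma dg_nil (c : Fin k) : dg a ([], c) = dw a c := by
  ext x
  fin_cases x <;> simp [dg, dw, Finsupp.single_apply]

@[simp] lemma first_cons (i : Fin k) (l : List (Fin k)) (c : Fin k) :
    first (i :: l, c) = i := rfl

@[simp] lemma first_nil (c : Fin k) : first (([] : List (Fin k)), c) = c := rfl

lemma head?_append_eq_first (p : HW k) : (p.1 ++ [p.2]).head? = some (first p) := by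
  rcases p with ⟨l, c⟩
  cases l <;> rfl

lemma finite_good (m : Fin 2 →₀ ℕ) : {p : HW k | good p ∧ dg a p = m}.Finite := by
  apply Set.Finite.subset
    (((List.finite_length_le (Fin k) (m 1)).prod (Set.finite_univ (α := Fin k))))
  rintro ⟨l, c⟩ ⟨-, h⟩
  refine ⟨?_, trivial⟩
  have h1 : dg a (l, c) 1 = m 1 := by rw [h]
  rw [dg_apply_one] at h1
  simp only at h1
  simp only [Set.mem_setOf_eq]
  omega

noncomputable def Dct (m : Fin 2 →₀ ℕ) : Finset (HW k) := (finite_good a m).toFinset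

lemma mem_Dct {m : Fin 2 →₀ ℕ} {p : HW k} : p ∈ Dct a m ↔ good p ∧ dg a p = m :=
  Set.Finite.mem_toFinset _

noncomputable def Us : R2 := fun m => ((Dct a m).card : ℚ)
noncomputable def Ds (i : Fin k) : R2 :=
  fun m => (((Dct a m).filter (fun p => first p = i)).card : ℚ)
noncomputable def Gs : R2 := fun m => ((∑ p ∈ Dct a m, p.1.length : ℕ) : ℚ)
noncomputable def Vs (i : Fin k) : R2 :=
  fun m => ((∑ p ∈ (Dct a m).filter (fun p => first p = i), p.1.length : ℕ) : ℚ)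

lemma eqU : Us a = ∑ i : Fin k, Ds a i := by
  ext m
  rw [MvPowerSeries.coeff_apply, map_sum]
  simp only [MvPowerSeries.coeff_apply, Us, Ds]
  exact_mod_cast congrArg (Nat.cast : ℕ → ℚ)
    (Finset.card_eq_sum_card_fiberwise (fun p (_ : p ∈ Dct a m) => Finset.mem_univ (first p)))

lemma eqG : Gs a = ∑ i : Fin k, Vs a i := by
  ext m
  rw [MvPowerSeries.coeff_apply, map_sum]
  simp only [MvPowerSeries.coeff_apply, Gs, Vs]
  exact_mod_cast congrArg (Nat.cast : ℕ → ℚ)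
    (Finset.sum_fiberwise_of_maps_to (fun p (_ : p ∈ Dct a m) => Finset.mem_univ (first p))
      (fun p => p.1.length)).symm


/- ### peeling the first letter -/

lemma coeff_eval (f : R2) (m : Fin 2 →₀ ℕ) : MvPowerSeries.coeff m f = f m := rfl

lemma sub_apply (f g : R2) (m : Fin 2 →₀ ℕ) : (f - g) m = f m - g m := by
  rw [← coeff_eval (f - g), map_sub, coeff_eval, coeff_eval]

lemma add_apply (f g : R2) (m : Fin 2 →₀ ℕ) : (f + g) m = f m + g m := by
  rw [← coeff_eval (f + g), map_add, coeff_eval, coeff_eval]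

lemma head?_append_eq_first' (l : List (Fin k)) (c : Fin k) :
    (l ++ [c]).head? = some (first (l, c)) := by
  cases l <;> rfl

lemma eq_cons_of_first {i : Fin k} {p : HW k} (hne : ¬ p.1 = []) (hf : first p = i) :
    p.1 = i :: p.1.tail := by
  rcases p with ⟨l, c⟩
  cases l with
  | nil => exact absurd rfl hne
  | cons x t =>
      have hx : x = i := hf
      simp [hx]

lemma dest_mem {m : Fin 2 →₀ ℕ} {i : Fin k} {l' : List (Fin k)} {c : Fin k}
    (h : (i :: l', c) ∈ Dct a m) :
    dz a i ≤ m ∧ (l', c) ∈ Dct a (m - dz a i) ∧ ¬ first (l', c) = i := by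
  rw [mem_Dct] at h
  obtain ⟨hg, hd⟩ := h
  rw [dg_cons] at hd
  have hle : dz a i ≤ m := hd ▸ self_le_add_right _ _
  have hsub : m - dz a i = dg a (l', c) := by rw [← hd, add_tsub_cancel_left]
  have hchain : List.Chain' (· ≠ ·) (i :: (l' ++ [c])) := hg
  rw [List.Chain', List.isChain_cons] at hchain
  refine ⟨hle, (mem_Dct a).2 ⟨hchain.2, hsub.symm⟩, ?_⟩
  have := hchain.1 (first (l', c)) (by rw [head?_append_eq_first']; rfl)
  exact fun h' => this h'.symm

lemma cons_mem {m : Fin 2 →₀ ℕ} {i : Fin k} (hm : dz a i ≤ m) {p' : HW k}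
    (h : p' ∈ Dct a (m - dz a i)) (hf : ¬ first p' = i) :
    (i :: p'.1, p'.2) ∈ Dct a m := by
  rw [mem_Dct] at h ⊢
  obtain ⟨hg, hd⟩ := h
  constructor
  · show List.Chain' (· ≠ ·) (i :: (p'.1 ++ [p'.2]))
    rw [List.Chain', List.isChain_cons]
    refine ⟨?_, hg⟩
    intro y hy
    rw [head?_append_eq_first'] at hy
    rw [Option.mem_some_iff] at hy
    rw [← hy]
    exact fun h' => hf h'.symm
  · rw [show dg a (i :: p'.1, p'.2) = dz a i + dg a (p'.1, p'.2) from dg_cons a i p'.1 p'.2]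
    rw [show ((p'.1, p'.2) : HW k) = p' from rfl, hd, add_tsub_cancel_of_le hm]

lemma peel_sum (i : Fin k) (m : Fin 2 →₀ ℕ) (hm : dz a i ≤ m) (f : HW k → ℚ) :
    ∑ p ∈ (Dct a m).filter (fun p => first p = i ∧ ¬ p.1 = []), f p
      = ∑ p ∈ (Dct a (m - dz a i)).filter (fun p => ¬ first p = i), f (i :: p.1, p.2) := by
  apply Finset.sum_nbij' (i := fun p : HW k => (p.1.tail, p.2))
    (j := fun p : HW k => (i :: p.1, p.2))
  · intro p hp
    rw [Finset.mem_filter] at hp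
    obtain ⟨hp1, hf, hne⟩ := hp
    have hcons := eq_cons_of_first hne hf
    have hp1' : (i :: p.1.tail, p.2) ∈ Dct a m := by
      rwa [show (i :: p.1.tail, p.2) = p from Prod.ext hcons.symm rfl]
    have := dest_mem a hp1'
    exact Finset.mem_filter.2 ⟨this.2.1, this.2.2⟩
  · intro p hp
    rw [Finset.mem_filter] at hp
    exact Finset.mem_filter.2 ⟨cons_mem a hm hp.1 hp.2, rfl, by simp⟩
  · intro p hp
    rw [Finset.mem_filter] at hp
    exact Prod.ext (eq_cons_of_first hp.2.2 hp.2.1).symm rfl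
  · intro p hp
    rfl
  · intro p hp
    rw [Finset.mem_filter] at hp
    exact congrArg f (Prod.ext (eq_cons_of_first hp.2.2 hp.2.1) rfl)

lemma singleton_filter (i : Fin k) (m : Fin 2 →₀ ℕ) :
    ((Dct a m).filter (fun p => first p = i ∧ p.1 = []))
      = if m = dw a i then {(([] : List (Fin k)), i)} else ∅ := by
  ext p
  rw [Finset.mem_filter, mem_Dct]
  split_ifs with hm
  · simp only [Finset.mem_singleton]
    constructor
    · rintro ⟨⟨hg, hd⟩, hf, hnil⟩
      rcases p with ⟨l, c⟩
      simp only at hnil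
      subst hnil
      have : c = i := hf
      rw [this]
    · rintro rfl
      refine ⟨⟨?_, ?_⟩, rfl, rfl⟩
      · simp [good, List.Chain']
      · rw [dg_nil, hm]
  · simp only [Finset.notMem_empty, iff_false]
    rintro ⟨⟨hg, hd⟩, hf, hnil⟩
    rcases p with ⟨l, c⟩
    simp only at hnil
    subst hnil
    rw [dg_nil] at hd
    have : c = i := hf
    rw [this] at hd
    exact hm hd.symm

lemma empty_of_not_le (i : Fin k) (m : Fin 2 →₀ ℕ) (hm : ¬ dz a i ≤ m) :
    ((Dct a m).filter (fun p => first p = i ∧ ¬ p.1 = [])) = ∅ := by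
  rw [Finset.eq_empty_iff_forall_notMem]
  intro p hp
  rw [Finset.mem_filter] at hp
  obtain ⟨hp1, hf, hne⟩ := hp
  have hcons := eq_cons_of_first hne hf
  have hp1' : (i :: p.1.tail, p.2) ∈ Dct a m := by
    rwa [show (i :: p.1.tail, p.2) = p from Prod.ext hcons.symm rfl]
  exact hm (dest_mem a hp1').1

lemma compl_card (i : Fin k) (m' : Fin 2 →₀ ℕ) :
    (((Dct a m').filter (fun p => ¬ first p = i)).card : ℚ)
      = ((Dct a m').card : ℚ) - ((Dct a m').filter (fun p => first p = i)).card := by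
  have h := Finset.card_filter_add_card_filter_not
    (s := Dct a m') (p := fun p => first p = i)
  have h' : (((Dct a m').filter (fun p => first p = i)).card : ℚ)
      + ((Dct a m').filter (fun p => ¬ first p = i)).card = ((Dct a m').card : ℚ) := by
    exact_mod_cast h
  linarith

lemma compl_sum (i : Fin k) (m' : Fin 2 →₀ ℕ) :
    ((∑ p ∈ (Dct a m').filter (fun p => ¬ first p = i), p.1.length : ℕ) : ℚ)
      = ((∑ p ∈ Dct a m', p.1.length : ℕ) : ℚ)
        - ((∑ p ∈ (Dct a m').filter (fun p => first p = i), p.1.length : ℕ) : ℚ) := by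
  have h := Finset.sum_filter_add_sum_filter_not (Dct a m') (fun p => first p = i)
    (fun p => p.1.length)
  have h' : ((∑ p ∈ (Dct a m').filter (fun p => first p = i), p.1.length : ℕ) : ℚ)
      + ((∑ p ∈ (Dct a m').filter (fun p => ¬ first p = i), p.1.length : ℕ) : ℚ)
      = ((∑ p ∈ Dct a m', p.1.length : ℕ) : ℚ) := by
    exact_mod_cast h
  linarith

lemma split_sum_q (i : Fin k) (m : Fin 2 →₀ ℕ) (f : HW k → ℚ) :
    ∑ p ∈ (Dct a m).filter (fun p => first p = i), f p
      = ∑ p ∈ (Dct a m).filter (fun p => first p = i ∧ p.1 = []), f p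
        + ∑ p ∈ (Dct a m).filter (fun p => first p = i ∧ ¬ p.1 = []), f p := by
  rw [← Finset.filter_filter, ← Finset.filter_filter]
  exact (Finset.sum_filter_add_sum_filter_not
    ((Dct a m).filter (fun p => first p = i)) (fun p => p.1 = []) f).symm

lemma eqD (i : Fin k) :
    Ds a i = (MvPowerSeries.monomial (dw a i) 1)
      + (MvPowerSeries.monomial (dz a i) 1) * (Us a - Ds a i) := by
  ext m
  rw [map_add, MvPowerSeries.coeff_monomial, MvPowerSeries.coeff_monomial_mul,
    coeff_eval]
  have hDs : (Ds a i) m = ∑ p ∈ (Dct a m).filter (fun p => first p = i), (1:ℚ) := by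
    simp [Ds, Finset.sum_const]
  rw [hDs, split_sum_q]
  have h0 : ∑ p ∈ (Dct a m).filter (fun p => first p = i ∧ p.1 = []), (1:ℚ)
      = if m = dw a i then 1 else 0 := by
    rw [singleton_filter]
    split_ifs <;> simp
  rw [h0]
  congr 1
  split_ifs with hm
  · rw [peel_sum a i m hm (fun _ => (1:ℚ)), one_mul, coeff_eval, sub_apply]
    simp only [Us, Ds]
    rw [← compl_card]
    rw [Finset.sum_const, nsmul_eq_mul, mul_one]
  · rw [empty_of_not_le a i m hm, Finset.sum_empty]

lemma eqV (i : Fin k) :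
    Vs a i = (MvPowerSeries.monomial (dz a i) 1)
      * (Us a - Ds a i + (Gs a - Vs a i)) := by
  ext m
  rw [MvPowerSeries.coeff_monomial_mul, coeff_eval]
  have hVs : (Vs a i) m
      = ∑ p ∈ (Dct a m).filter (fun p => first p = i), ((p.1.length : ℚ)) := by
    simp [Vs]
  rw [hVs, split_sum_q]
  have h0 : ∑ p ∈ (Dct a m).filter (fun p => first p = i ∧ p.1 = []), ((p.1.length : ℚ))
      = 0 := by
    rw [singleton_filter]
    split_ifs <;> simp
  rw [h0, zero_add]
  split_ifs with hm
  · rw [peel_sum a i m hm (fun p => ((p.1.length : ℚ))), one_mul, coeff_eval,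
      add_apply, sub_apply, sub_apply]
    simp only [Us, Ds, Gs, Vs]
    rw [← compl_card, ← compl_sum]
    simp only [List.length_cons]
    push_cast
    rw [Finset.sum_add_distrib, Finset.sum_const, nsmul_eq_mul, mul_one]
    ring
  · rw [empty_of_not_le a i m hm, Finset.sum_empty]


/- ### palindrome structure -/

lemma length_odd {B : List ℕ} (hrev : B.reverse = B) (hch : B.Chain' (· ≠ ·))
    (hne : B ≠ []) : ∃ t, B.length = 2 * t + 1 := by
  rcases Nat.even_or_odd B.length with he | ho
  · exfalso
    obtain ⟨t, ht⟩ := he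
    have ht1 : 1 ≤ t := by
      rcases Nat.eq_zero_or_pos t with h0 | h1
      · exact absurd (List.length_eq_zero_iff.1 (by omega)) hne
      · exact h1
    obtain ⟨u, rfl⟩ : ∃ u, t = u + 1 := ⟨t - 1, by omega⟩
    have hlt : u + 1 < B.length := by omega
    have hne' := List.isChain_iff_getElem.1 hch u (by omega)
    apply hne'
    have h0 := List.getElem_of_eq hrev.symm (show u < B.length by omega)
    rw [h0, List.getElem_reverse]
    congr 1
    omega
  · obtain ⟨t, ht⟩ := ho
    exact ⟨t, by omega⟩

lemma palin_struct {B : List ℕ} (hrev : B.reverse = B) {t : ℕ} (hlen : B.length = 2 * t + 1) :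
    B = B.take t ++ [B.getD t 0] ++ (B.take t).reverse := by
  have ht : t < B.length := by omega
  obtain ⟨u, x, v, hB, hu, hv⟩ : ∃ u x v, B = u ++ x :: v ∧ u.length = t ∧ v.length = t :=
    ⟨B.take t, B[t], B.drop (t + 1),
      by conv_lhs => rw [← List.take_append_drop t B, List.drop_eq_getElem_cons ht],
      by simp; omega, by simp; omega⟩
  subst hB
  have hrev2 : v.reverse ++ (x :: u.reverse) = u ++ (x :: v) := by
    conv_rhs => rw [← hrev]
    simp
  obtain ⟨h1, h2⟩ := List.append_inj hrev2 (by simp [hv, hu])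
  have hv2 : u.reverse = v := by injection h2
  have htake : (u ++ x :: v).take t = u := List.take_left' hu
  have hgetD : (u ++ x :: v).getD t 0 = x := by
    rw [List.getD_append_right u (x :: v) 0 t (le_of_eq hu), hu, Nat.sub_self]
    rfl
  rw [htake, hgetD, hv2]
  simp

lemma chain'_palin {u : List ℕ} {x : ℕ} (h : (u ++ [x]).Chain' (· ≠ ·)) :
    ((u ++ [x]) ++ u.reverse).Chain' (· ≠ ·) := by
  rw [List.Chain', List.isChain_append]
  refine ⟨h, ?_, ?_⟩
  · rw [List.isChain_reverse]
    have hu : u.Chain' (· ≠ ·) := (List.isChain_append.1 h).1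
    exact hu.imp (fun a b hab => Ne.symm hab)
  · intro y hy z hz
    rw [List.getLast?_concat] at hy
    rw [Option.mem_some_iff] at hy
    subst hy
    rw [List.head?_reverse] at hz
    have h3 := (List.isChain_append.1 h).2.2 z hz x rfl
    exact h3.symm

/- ### partial inverse of a -/

noncomputable def ainv (hk : 1 ≤ k) (b : ℕ) : Fin k :=
  if h : ∃ i, a i = b then h.choose else ⟨0, hk⟩

lemma a_ainv (hk : 1 ≤ k) {b : ℕ} (h : ∃ i, a i = b) : a (ainv a hk b) = b := by
  rw [ainv, dif_pos h]
  exact h.choose_spec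

lemma ainv_a (hk : 1 ≤ k) (hinj : Function.Injective a) (i : Fin k) :
    ainv a hk (a i) = i := by
  apply hinj
  exact a_ainv a hk ⟨i, rfl⟩

lemma fin2_ext {f g : Fin 2 →₀ ℕ} (h0 : f 0 = g 0) (h1 : f 1 = g 1) : f = g := by
  apply Finsupp.ext
  intro z
  fin_cases z
  · exact h0
  · exact h1

/- ### fRises = Gs -/

lemma eqF (hk : 1 ≤ k) (hpos : ∀ i, 0 < a i) (hmono : StrictMono a) :
    fRises a = Gs a := by
  have hinj : Function.Injective a := hmono.injective
  ext m
  rw [coeff_eval, coeff_eval]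
  show ((∑ c ∈ Finset.univ.filter (fun c : Composition (m 0) =>
      (∀ b ∈ c.blocks, ∃ i, a i = b) ∧ c.blocks.Chain' (· ≠ ·) ∧
      c.blocks.reverse = c.blocks ∧ c.length = m 1),
      risesL c.blocks : ℕ) : ℚ) = ((∑ p ∈ Dct a m, p.1.length : ℕ) : ℚ)
  have hstep : ∑ c ∈ Finset.univ.filter (fun c : Composition (m 0) =>
      (∀ b ∈ c.blocks, ∃ i, a i = b) ∧ c.blocks.Chain' (· ≠ ·) ∧
      c.blocks.reverse = c.blocks ∧ c.length = m 1), risesL c.blocks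
      = ∑ c ∈ (Finset.univ.filter (fun c : Composition (m 0) =>
      (∀ b ∈ c.blocks, ∃ i, a i = b) ∧ c.blocks.Chain' (· ≠ ·) ∧
      c.blocks.reverse = c.blocks ∧ c.length = m 1)).filter
        (fun c => ¬ c.blocks = []), risesL c.blocks := by
    refine (Finset.sum_filter_of_ne ?_).symm
    intro c _ hne hnil
    rw [hnil] at hne
    exact hne rfl
  rw [hstep]
  norm_cast
  refine (Finset.sum_bij'
    (i := fun (p : HW k) (hp : p ∈ Dct a m) =>
      (⟨p.1.map a ++ [a p.2] ++ (p.1.map a).reverse, ?_, ?_⟩ : Composition (m 0)))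
    (j := fun (c : Composition (m 0)) (hc : _) =>
      (((c.blocks.take ((m 1 - 1) / 2)).map (ainv a hk),
        ainv a hk (c.blocks.getD ((m 1 - 1) / 2) 0)) : HW k))
    ?_ ?_ ?_ ?_ ?_).symm
  · -- blocks_pos
    intro j hj
    simp only [List.mem_append, List.mem_reverse, List.mem_map, List.mem_singleton] at hj
    rcases hj with (⟨y, _, rfl⟩ | rfl) | ⟨y, _, rfl⟩ <;> exact hpos _
  · -- blocks_sum
    have h := ((mem_Dct a).1 hp).2
    have hd0 : 2 * (p.1.map a).sum + a p.2 = m 0 := by rw [← h, dg_apply_zero]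
    rw [← hd0]
    simp [List.sum_append, List.sum_reverse]
    ring
  · -- hi : image in filtered compositions
    intro p hp
    have h := ((mem_Dct a).1 hp).2
    have hgood : good p := ((mem_Dct a).1 hp).1
    have hd1 : 2 * p.1.length + 1 = m 1 := by rw [← h, dg_apply_one]
    have hchain_vals : (p.1.map a ++ [a p.2]).Chain' (· ≠ ·) := by
      have h2 : (p.1 ++ [p.2]).Chain' (fun i j => a i ≠ a j) :=
        hgood.imp (fun i j hij hc => hij (hinj hc))
      have h3 := (List.isChain_map a).2 h2
      simpa [List.Chain'] using h3
    rw [Finset.mem_filter, Finset.mem_filter]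
    refine ⟨⟨Finset.mem_univ _, ?_, ?_, ?_, ?_⟩, by simp⟩
    · intro b hb
      simp only [List.mem_append, List.mem_reverse, List.mem_map, List.mem_singleton] at hb
      rcases hb with (⟨y, _, rfl⟩ | rfl) | ⟨y, _, rfl⟩ <;> exact ⟨_, rfl⟩
    · exact chain'_palin hchain_vals
    · simp [List.reverse_append]
    · show (p.1.map a ++ [a p.2] ++ (p.1.map a).reverse).length = m 1
      simp only [List.length_append, List.length_reverse, List.length_map,
        List.length_singleton]
      omega
  · -- hj : backward map lands in Dct
    intro c hc
    rw [Finset.mem_filter, Finset.mem_filter] at hc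
    obtain ⟨⟨-, hall, hch, hrev, hlen⟩, hne⟩ := hc
    obtain ⟨t, hBlen⟩ := length_odd hrev hch hne
    have hlen' : c.blocks.length = m 1 := hlen
    have hT : (m 1 - 1) / 2 = t := by omega
    rw [hT]
    have hstruct := palin_struct hrev hBlen
    set B := c.blocks with hBdef
    set u := B.take t with hudef
    set x := B.getD t 0 with hxdef
    have hulen : u.length = t := by rw [hudef]; simp; omega
    have hxB : x ∈ B := by rw [hstruct]; simp
    have humem : ∀ b ∈ u, ∃ i, a i = b := fun b hb => hall b (List.take_subset t B hb)
    have hmapu : (u.map (ainv a hk)).map a = u := by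
      rw [List.map_map]
      conv_rhs => rw [← List.map_id u]
      exact List.map_congr_left (fun b hb => by simp [a_ainv a hk (humem b hb)])
    have hax : a (ainv a hk x) = x := a_ainv a hk (hall x hxB)
    have hchux : (u ++ [x]).Chain' (· ≠ ·) := by
      rw [hstruct] at hch
      exact (List.isChain_append.1 hch).1
    rw [mem_Dct]
    constructor
    · show ((u.map (ainv a hk)) ++ [ainv a hk x]).Chain' (· ≠ ·)
      have he : u ++ [x] = ((u.map (ainv a hk)) ++ [ainv a hk x]).map a := by
        rw [List.map_append, hmapu]
        simp [hax]
      rw [he] at hchux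
      exact ((List.isChain_map a).1 hchux).imp (fun i j hij he2 => hij (congrArg a he2))
    · have hm0 : m 0 = 2 * u.sum + x := by
        rw [← c.blocks_sum]
        conv_lhs => rw [← hBdef, hstruct]
        simp [List.sum_append, List.sum_reverse]
        ring
      have hm1 : m 1 = 2 * u.length + 1 := by rw [← hlen', hBlen, hulen]
      apply fin2_ext
      · rw [dg_apply_zero]
        dsimp only
        rw [hmapu, hax, hm0]
      · rw [dg_apply_one]
        dsimp only
        rw [List.length_map, hm1]
  · -- left inverse
    intro p hp
    dsimp only
    have h := ((mem_Dct a).1 hp).2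
    have hd1 : 2 * p.1.length + 1 = m 1 := by rw [← h, dg_apply_one]
    have hT : (m 1 - 1) / 2 = p.1.length := by omega
    have htake : (p.1.map a ++ [a p.2] ++ (p.1.map a).reverse).take ((m 1 - 1) / 2)
        = p.1.map a := by
      rw [hT, List.append_assoc]
      exact List.take_left' (by simp)
    have hgetD : (p.1.map a ++ [a p.2] ++ (p.1.map a).reverse).getD ((m 1 - 1) / 2) 0
        = a p.2 := by
      rw [hT, List.append_assoc,
        List.getD_append_right (p.1.map a) _ 0 p.1.length (by simp)]
      simp
    rw [htake, hgetD]
    refine Prod.ext ?_ ?_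
    · show (p.1.map a).map (ainv a hk) = p.1
      rw [List.map_map]
      conv_rhs => rw [← List.map_id p.1]
      exact List.map_congr_left (fun b _ => by simp [ainv_a a hk hinj])
    · exact ainv_a a hk hinj p.2
  · -- right inverse
    intro c hc
    rw [Finset.mem_filter, Finset.mem_filter] at hc
    obtain ⟨⟨-, hall, hch, hrev, hlen⟩, hne⟩ := hc
    obtain ⟨t, hBlen⟩ := length_odd hrev hch hne
    have hlen' : c.blocks.length = m 1 := hlen
    have hT : (m 1 - 1) / 2 = t := by omega
    have humem : ∀ b ∈ c.blocks.take t, ∃ i, a i = b :=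
      fun b hb => hall b (List.take_subset t c.blocks hb)
    have hmapu : ((c.blocks.take t).map (ainv a hk)).map a = c.blocks.take t := by
      rw [List.map_map]
      conv_rhs => rw [← List.map_id (c.blocks.take t)]
      exact List.map_congr_left (fun b hb => by simp [a_ainv a hk (humem b hb)])
    have hstruct := palin_struct hrev hBlen
    have hxB : c.blocks.getD t 0 ∈ c.blocks := by
      rw [List.getD_eq_getElem c.blocks 0 (show t < c.blocks.length by omega)]
      exact List.getElem_mem _
    have hax : a (ainv a hk (c.blocks.getD t 0)) = c.blocks.getD t 0 :=
      a_ainv a hk (hall _ hxB)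
    ext1
    dsimp only
    rw [hT, hmapu, hax, ← hstruct]
  · -- values agree
    intro p hp
    have hgood : good p := ((mem_Dct a).1 hp).1
    have hchain_vals : (p.1.map a ++ [a p.2]).Chain' (· ≠ ·) := by
      have h2 : (p.1 ++ [p.2]).Chain' (fun i j => a i ≠ a j) :=
        hgood.imp (fun i j hij hc => hij (hinj hc))
      have h3 := (List.isChain_map a).2 h2
      simpa [List.Chain'] using h3
    show p.1.length = risesL (p.1.map a ++ [a p.2] ++ (p.1.map a).reverse)
    rw [risesL_palin (p.1.map a) (a p.2) hchain_vals]
    simp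


/- ### monomials and statement primitives -/

noncomputable def zm (i : Fin k) : R2 := MvPowerSeries.monomial (dz a i) 1
noncomputable def wm (i : Fin k) : R2 := MvPowerSeries.monomial (dw a i) 1

lemma zm_eq (i : Fin k) :
    (MvPowerSeries.X 0 : R2) ^ (2 * a i) * (MvPowerSeries.X 1) ^ 2 = zm a i := by
  rw [MvPowerSeries.X_pow_eq, MvPowerSeries.X_pow_eq, MvPowerSeries.monomial_mul_monomial,
    one_mul]
  rfl

lemma wm_eq (i : Fin k) :
    (MvPowerSeries.X 0 : R2) ^ (a i) * (MvPowerSeries.X 1) = wm a i := by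
  rw [show (MvPowerSeries.X 1 : R2) = (MvPowerSeries.X 1) ^ 1 from (pow_one _).symm,
    MvPowerSeries.X_pow_eq, MvPowerSeries.X_pow_eq, MvPowerSeries.monomial_mul_monomial,
    one_mul]
  rfl

lemma s3_eq (i : Fin k) :
    (MvPowerSeries.X 0 : R2) ^ (3 * a i) * (MvPowerSeries.X 1) ^ 3 = wm a i * zm a i := by
  rw [MvPowerSeries.X_pow_eq, MvPowerSeries.X_pow_eq, MvPowerSeries.monomial_mul_monomial,
    one_mul, wm, zm, MvPowerSeries.monomial_mul_monomial, one_mul]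
  have he : (Finsupp.single (0 : Fin 2) (3 * a i) + Finsupp.single 1 3)
      = dw a i + dz a i := by
    apply fin2_ext <;> simp [dw, dz, Finsupp.single_apply] <;> ring
  rw [he]

lemma QQ_eq (i : Fin k) : QQ a i = 1 + zm a i := by rw [QQ, zm_eq]

lemma const_zm (i : Fin k) : MvPowerSeries.constantCoeff (zm a i) = 0 := by
  rw [zm, ← MvPowerSeries.coeff_zero_eq_constantCoeff_apply, MvPowerSeries.coeff_monomial]
  rw [if_neg]
  intro h
  have := congrArg (fun f : Fin 2 →₀ ℕ => f 1) h.symm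
  simp [dz, Finsupp.single_apply] at this

lemma const_QQ (i : Fin k) : MvPowerSeries.constantCoeff (QQ a i) = 1 := by
  rw [QQ_eq, map_add, map_one, const_zm, add_zero]

end Stmt17


open Stmt17

theorem stmt17 {k : ℕ} (hk : 1 ≤ k) (a : Fin k → ℕ) (hpos : ∀ i, 0 < a i)
    (hmono : StrictMono a) :
    fRises a
      = ((∑ i : Fin k, (X 0) ^ (3 * a i) * (X 1) ^ 3 * ((QQ a i) ^ 2)⁻¹)
            * ((∑ i : Fin k, (X 0) ^ (2 * a i) * (X 1) ^ 2 * (QQ a i)⁻¹) - 1)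
          + (∑ i : Fin k, (X 0) ^ (a i) * X 1 * (QQ a i)⁻¹)
            * (∑ i : Fin k, (X 0) ^ (2 * a i) * (X 1) ^ 2 * ((QQ a i) ^ 2)⁻¹))
        * ((1 - ∑ i : Fin k, (X 0) ^ (2 * a i) * (X 1) ^ 2 * (QQ a i)⁻¹) ^ 2)⁻¹ := by
  classical
  have hQc := const_QQ a
  have hq1 : ∀ i, QQ a i * (QQ a i)⁻¹ = 1 := fun i =>
    MvPowerSeries.mul_inv_cancel _ (by rw [hQc i]; norm_num)
  have hq2 : ∀ i : Fin k, ((QQ a i) ^ 2)⁻¹ = (QQ a i)⁻¹ * (QQ a i)⁻¹ := by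
    intro i
    rw [MvPowerSeries.inv_eq_iff_mul_eq_one (by rw [map_pow, hQc i]; norm_num)]
    linear_combination (QQ a i * (QQ a i)⁻¹ + 1) * hq1 i
  simp_rw [s3_eq a, zm_eq a, wm_eq a, hq2]
  rw [eqF a hk hpos hmono]
  set S1 := ∑ i : Fin k, wm a i * (QQ a i)⁻¹ with hS1
  set S2 := ∑ i : Fin k, zm a i * (QQ a i)⁻¹ with hS2
  set S2b := ∑ i : Fin k, zm a i * ((QQ a i)⁻¹ * (QQ a i)⁻¹) with hS2b
  set S3 := ∑ i : Fin k, wm a i * zm a i * ((QQ a i)⁻¹ * (QQ a i)⁻¹) with hS3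
  have hS2c : MvPowerSeries.constantCoeff S2 = 0 := by
    rw [hS2, map_sum]
    apply Finset.sum_eq_zero
    intro i _
    rw [map_mul, const_zm, zero_mul]
  have hPinv : (1 - S2) ^ 2 * ((1 - S2) ^ 2)⁻¹ = 1 := by
    apply MvPowerSeries.mul_inv_cancel
    rw [map_pow, map_sub, map_one, hS2c]
    norm_num
  have hD : ∀ i, Ds a i = wm a i + zm a i * (Us a - Ds a i) := eqD a
  have hV : ∀ i, Vs a i = zm a i * (Us a - Ds a i + (Gs a - Vs a i)) := eqV a
  have hQmul : ∀ i, (1 + zm a i) * (QQ a i)⁻¹ = 1 := fun i => by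
    rw [← QQ_eq]; exact hq1 i
  have hDval : ∀ i, Ds a i = (wm a i + zm a i * Us a) * (QQ a i)⁻¹ := by
    intro i
    have h1 : Ds a i * QQ a i = wm a i + zm a i * Us a := by
      rw [QQ_eq]; linear_combination hD i
    calc Ds a i = Ds a i * (QQ a i * (QQ a i)⁻¹) := by rw [hq1 i, mul_one]
      _ = (Ds a i * QQ a i) * (QQ a i)⁻¹ := by ring
      _ = _ := by rw [h1]
  have hVval : ∀ i, Vs a i = zm a i * (Us a + Gs a - Ds a i) * (QQ a i)⁻¹ := by
    intro i
    have h1 : Vs a i * QQ a i = zm a i * (Us a + Gs a - Ds a i) := by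
      rw [QQ_eq]; linear_combination hV i
    calc Vs a i = Vs a i * (QQ a i * (QQ a i)⁻¹) := by rw [hq1 i, mul_one]
      _ = (Vs a i * QQ a i) * (QQ a i)⁻¹ := by ring
      _ = _ := by rw [h1]
  have hU1 : Us a = S1 + S2 * Us a := by
    calc Us a = ∑ i, (wm a i + zm a i * Us a) * (QQ a i)⁻¹ := by
          conv_lhs => rw [eqU a]
          exact Finset.sum_congr rfl (fun i _ => hDval i)
      _ = ∑ i, (wm a i * (QQ a i)⁻¹ + zm a i * (QQ a i)⁻¹ * Us a) :=
          Finset.sum_congr rfl (fun i _ => by ring)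
      _ = S1 + S2 * Us a := by
          rw [Finset.sum_add_distrib, ← Finset.sum_mul, hS1, hS2]
  have hterm : ∀ i, zm a i * (Us a + Gs a - Ds a i) * (QQ a i)⁻¹
      = zm a i * (QQ a i)⁻¹ * Us a + zm a i * (QQ a i)⁻¹ * Gs a
        - wm a i * zm a i * ((QQ a i)⁻¹ * (QQ a i)⁻¹)
        - (zm a i * (QQ a i)⁻¹ - zm a i * ((QQ a i)⁻¹ * (QQ a i)⁻¹)) * Us a := by
    intro i
    rw [hDval i]
    linear_combination (- Us a * zm a i * (QQ a i)⁻¹) * hQmul i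
  have hG1 : Gs a = S2 * Us a + S2 * Gs a - S3 - (S2 - S2b) * Us a := by
    calc Gs a = ∑ i, (zm a i * (QQ a i)⁻¹ * Us a + zm a i * (QQ a i)⁻¹ * Gs a
        - wm a i * zm a i * ((QQ a i)⁻¹ * (QQ a i)⁻¹)
        - (zm a i * (QQ a i)⁻¹ - zm a i * ((QQ a i)⁻¹ * (QQ a i)⁻¹)) * Us a) := by
          conv_lhs => rw [eqG a]
          exact Finset.sum_congr rfl (fun i _ => (hVval i).trans (hterm i))
      _ = S2 * Us a + S2 * Gs a - S3 - (S2 - S2b) * Us a := by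
          rw [Finset.sum_sub_distrib, Finset.sum_sub_distrib, Finset.sum_add_distrib,
            ← Finset.sum_mul, ← Finset.sum_mul, ← Finset.sum_mul, Finset.sum_sub_distrib,
            ← hS2, ← hS2b, ← hS3]
  have hG2 : Gs a * (1 - S2) = Us a * S2b - S3 := by linear_combination hG1
  have hU2 : Us a * (1 - S2) = S1 := by linear_combination hU1
  have hNum : Gs a * (1 - S2) ^ 2 = S3 * (S2 - 1) + S1 * S2b := by
    linear_combination (1 - S2) * hG2 + S2b * hU2
  calc Gs a = Gs a * ((1 - S2) ^ 2 * ((1 - S2) ^ 2)⁻¹) := by rw [hPinv, mul_one]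
    _ = (Gs a * (1 - S2) ^ 2) * ((1 - S2) ^ 2)⁻¹ := by ring
    _ = (S3 * (S2 - 1) + S1 * S2b) * ((1 - S2) ^ 2)⁻¹ := by rw [hNum]
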